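/- For the (1,4) spectral curve, define the free energies: F_0(λ,t) = −t⁶/972 + 2λt³/27 − 3λ²/4 + (λ²/4)·log(3λ²), F_1(λ) = −(1/12)·log λ, and for g ≥ 2, F_g(λ) = (B_{2g}/(2g(2g−2)))·λ^{2−2g}, regarded as real-analytic functions of λ > 0 (t ∈ ℝ a parameter); here B_n denotes the n-th Bernoulli number, defined by w/(e^w − 1) = ∑_{n≥0} B_n·w^n/n!, and B_n(X) denotes the n-th Bernoulli polynomial, defined by w·e^{Xw}/(e^w − 1) = ∑_{n≥0} B_n(X)·w^n/n!. Fix ν ∈ ℝ and define V_{−1}(λ) = F_0'(λ), V_0(λ) = −((2ν−1)/2)·F_0''(λ), and V_m(λ) = (B_{m+1}(ν)/(m(m+1)))·λ^{−m} for m ≥ 1. Then for all t ∈ ℝ and λ > 0: (i) ∑ ((ν^n − (ν−1)^n)/n!)·V_m^{(n)}(λ) = (1/2)·log(3λ²), the sum being over all pairs (m, n) with m ≥ −1, n ≥ 0, and m + n = 0; and (ii) for every integer k ≥ 1, ∑ ((ν^n − (ν−1)^n)/n!)·V_m^{(n)}(λ) = 0, the sum being over all pairs (m, n) with m ≥ −1,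 n ≥ 0, and m + n = k. Equivalently, the formal Laurent series V_reg(λ; ħ) = ∑_{m≥−1} ħ^m·V_m(λ) satisfies e^{(ν−1)ħ∂_λ}(e^{ħ∂_λ} − 1)·V_reg = (1/2)·log(3λ²) upon Taylor expansion in ħ. -/

import Mathlib

/-! For `j + n = k + 2` the `n`-th derivative of `V_{j-1}` is `(-1)ⁿ k! (B_j(ν)/j!) λ^{-(k+1)}`:
for `j ≥ 2` this is the derivative of a power of `λ`, and for `j ≤ 1` it holds because
`F₀'' = (1/2) log(3λ²)` has `F₀''' = 1/λ` and `B₀ = 1`, `B₁(ν) = ν - 1/2`. Hence the `k`-th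
equation is `k! λ^{-(k+1)}` times the coefficient of `w^{k+2}` in
`(∑ⱼ B_j(ν) wʲ/j!) (e^{-νw} - e^{(1-ν)w}) = w e^{νw}/(eʷ - 1) · e^{-νw} (1 - eʷ) = -w`,
which vanishes. -/

/-- The genus-zero free energy `F₀(λ,t)` of the (1,4) spectral curve. -/
noncomputable def F0 (t : ℝ) : ℝ → ℝ :=
  fun l => -t ^ 6 / 972 + 2 * l * t ^ 3 / 27 - 3 * l ^ 2 / 4
    + l ^ 2 / 4 * Real.log (3 * l ^ 2)

/-- The coefficients `V_m` (for `m ≥ −1`, reindexed by `j = m + 1 : ℕ`) of the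
regularized Voros coefficient of the quantum (1,4) curve:
`V₋₁ = F₀'`, `V₀(λ) = −((2ν−1)/2)·F₀''(λ)`, and
`V_m(λ) = (B_{m+1}(ν)/(m(m+1)))·λ^{−m}` for `m ≥ 1`, where `B_n(X)` is the `n`-th
Bernoulli polynomial. -/
noncomputable def V14 (t ν : ℝ) : ℕ → ℝ → ℝ
  | 0 => deriv (F0 t)
  | 1 => fun l => -((2 * ν - 1) / 2) * deriv (deriv (F0 t)) l
  | (m + 2) => fun l =>
      (Polynomial.aeval ν (Polynomial.bernoulli (m + 2)) : ℝ)
          / (((m : ℝ) + 1) * ((m : ℝ) + 2)) * l ^ (-((m : ℤ) + 1))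

open Finset
open scoped Nat

theorem iteratedDeriv_zpow_neg {𝕜 : Type*} [NontriviallyNormedField 𝕜] (a n : ℕ) (x : 𝕜) :
    iteratedDeriv n (fun y : 𝕜 => y ^ (-(a : ℤ))) x
      = (-1) ^ n * (a.ascFactorial n : 𝕜) * x ^ (-((a + n : ℕ) : ℤ)) := by
  have hprod : ∏ i ∈ range n, (-(a : 𝕜) - i) = (-1) ^ n * ∏ i ∈ range n, ((a : 𝕜) + i) := by
    simpa only [card_range, neg_add'] using prod_neg (s := range n) fun i => (a : 𝕜) + i
  rw [iteratedDeriv_eq_iterate, iter_deriv_zpow, Nat.ascFactorial_eq_prod_range]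
  push_cast
  rw [hprod, neg_add']

namespace PowerSeries

theorem bernoulli_mul_rescale_exp_sub {A : Type*} [Field A] [CharZero A] (ν : A) :
    (mk fun n => Polynomial.aeval ν ((1 / n ! : ℚ) • Polynomial.bernoulli n)) *
      (rescale (-ν) (exp A) - rescale (1 - ν) (exp A)) = -X := by
  have hshift : rescale (1 - ν) (exp A) = rescale (-ν) (exp A) * exp A := by
    have h := exp_mul_exp_eq_exp_add (-ν) 1
    rw [rescale_one] at h
    rw [show 1 - ν = -ν + 1 by ring, ← h, RingHom.id_apply]
  have hinv : rescale (-ν) (exp A) * rescale ν (exp A) = 1 := by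
    rw [exp_mul_exp_eq_exp_add, neg_add_cancel, rescale_zero]; simp
  calc _ = -rescale (-ν) (exp A) *
          ((mk fun n => Polynomial.aeval ν ((1 / n ! : ℚ) • Polynomial.bernoulli n)) *
            (exp A - 1)) := by rw [hshift]; ring
    _ = -X * (rescale (-ν) (exp A) * rescale ν (exp A)) := by
          rw [Polynomial.bernoulli_generating_function]; ring
    _ = -X := by rw [hinv, mul_one]

end PowerSeries

theorem sum_antidiagonal_bernoulli_mul_sub_pow {A : Type*} [Field A] [CharZero A] (ν : A)
    {K : ℕ} (hK : K ≠ 1) :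
    ∑ p ∈ antidiagonal K, Polynomial.aeval ν (Polynomial.bernoulli p.1) / p.1 ! *
      (((-ν) ^ p.2 - (1 - ν) ^ p.2) / p.2 !) = 0 := by
  have h := congrArg (PowerSeries.coeff K) (PowerSeries.bernoulli_mul_rescale_exp_sub ν)
  rw [PowerSeries.coeff_mul, map_neg, PowerSeries.coeff_X, if_neg hK, neg_zero] at h
  rw [← h]
  refine sum_congr rfl fun p _ => ?_
  simp only [PowerSeries.coeff_mk, map_sub, PowerSeries.coeff_rescale, PowerSeries.coeff_exp,
    map_smul, Rat.smul_def, one_div, Rat.cast_inv, Rat.cast_natCast, map_inv₀, map_natCast]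
  ring

section F0Derivatives

open Real Filter Topology

theorem F0_eq (t y : ℝ) :
    F0 t y = -t ^ 6 / 972 + 2 * t ^ 3 / 27 * y + (log 3 - 3) / 4 * y ^ 2 + y ^ 2 / 2 * log y := by
  rcases eq_or_ne y 0 with rfl | hy
  · simp [F0]
  · rw [F0, log_mul (by norm_num) (pow_ne_zero 2 hy), log_pow]
    push_cast
    ring

variable (t : ℝ) {x : ℝ}

theorem hasDerivAt_F0 (hx : x ≠ 0) :
    HasDerivAt (F0 t) (2 * t ^ 3 / 27 + (log 3 - 2) / 2 * x + x * log x) x := by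
  have h := ((((hasDerivAt_id x).const_mul (2 * t ^ 3 / 27)).const_add (-t ^ 6 / 972)).add
    ((hasDerivAt_pow 2 x).const_mul ((log 3 - 3) / 4))).add
    (((hasDerivAt_pow 2 x).div_const 2).mul (hasDerivAt_log hx))
  rw [show F0 t = _ from funext (F0_eq t)]
  refine h.congr_deriv ?_
  field_simp
  ring

theorem hasDerivAt_deriv_F0 (hx : x ≠ 0) : HasDerivAt (deriv (F0 t)) (log x + log 3 / 2) x := by
  have h := (((hasDerivAt_id x).const_mul ((log 3 - 2) / 2)).const_add (2 * t ^ 3 / 27)).add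
    ((hasDerivAt_id x).mul (hasDerivAt_log hx))
  refine (h.congr_of_eventuallyEq ?_).congr_deriv ?_
  · filter_upwards [eventually_ne_nhds hx] with y hy using (hasDerivAt_F0 t hy).deriv
  · simp only [id]; field_simp; ring

theorem deriv_deriv_F0 (hx : x ≠ 0) : deriv (deriv (F0 t)) x = 1 / 2 * log (3 * x ^ 2) := by
  rw [(hasDerivAt_deriv_F0 t hx).deriv, log_mul (by norm_num) (pow_ne_zero 2 hx), log_pow]
  push_cast
  ring

theorem deriv_deriv_deriv_F0 (hx : x ≠ 0) : deriv (deriv (deriv (F0 t))) x = x⁻¹ := by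
  have h := (hasDerivAt_log hx).add_const (log 3 / 2)
  refine (h.congr_of_eventuallyEq ?_).deriv
  filter_upwards [eventually_ne_nhds hx] with y hy using (hasDerivAt_deriv_F0 t hy).deriv

theorem iteratedDeriv_succ_deriv_deriv_F0 (hx : x ≠ 0) (k : ℕ) :
    iteratedDeriv (k + 1) (deriv (deriv (F0 t))) x = (-1) ^ k * k ! * x ^ (-1 - k : ℤ) := by
  have h : deriv (deriv (deriv (F0 t))) =ᶠ[𝓝 x] Inv.inv := by
    filter_upwards [eventually_ne_nhds hx] with y hy using deriv_deriv_deriv_F0 t hy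
  rw [iteratedDeriv_succ', h.iteratedDeriv_eq, iteratedDeriv_eq_iterate, iter_deriv_inv]

end F0Derivatives

theorem iteratedDeriv_V14 (t ν : ℝ) {l : ℝ} (hl : l ≠ 0) {j n k : ℕ} (h : j + n = k + 2) :
    iteratedDeriv n (V14 t ν j) l
      = (-1) ^ n * k ! * (Polynomial.aeval ν (Polynomial.bernoulli j) / j !) * l ^ (-1 - k : ℤ) :=
  match j, h with
  | 0, h => by
    obtain rfl : n = k + 2 := by omega
    rw [V14, iteratedDeriv_succ', iteratedDeriv_succ_deriv_deriv_F0 t hl, Polynomial.bernoulli_zero]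
    simp only [map_one, Nat.factorial_zero]
    ring
  | 1, h => by
    obtain rfl : n = k + 1 := by omega
    rw [V14, iteratedDeriv_const_mul_field, iteratedDeriv_succ_deriv_deriv_F0 t hl,
      Polynomial.bernoulli_one]
    simp only [map_sub, Polynomial.aeval_X, Polynomial.aeval_C, Nat.factorial_one]
    norm_num
    ring
  | m + 2, h => by
    obtain rfl : k = m + n := by omega
    have hexp : -((m : ℤ) + 1) = -((m + 1 : ℕ) : ℤ) := by push_cast; ring
    rw [V14, hexp, iteratedDeriv_const_mul_field, iteratedDeriv_zpow_neg,
      show -(((m + 1 + n : ℕ)) : ℤ) = -1 - ((m + n : ℕ) : ℤ) by push_cast; ring]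
    have hfac : ((m + n) ! : ℝ) = m ! * (m + 1).ascFactorial n := by
      exact_mod_cast (Nat.factorial_mul_ascFactorial m n).symm
    rw [hfac, Nat.factorial_succ, Nat.factorial_succ]
    push_cast
    field_simp
    ring

/-- For all `t ∈ ℝ`, `λ > 0` and `ν ∈ ℝ`:
(i) `∑_{(m,n) : m ≥ −1, n ≥ 0, m+n=0} ((νⁿ − (ν−1)ⁿ)/n!)·V_m⁽ⁿ⁾(λ) = (1/2)·log(3λ²)`;
(ii) for every `k ≥ 1`,
`∑_{(m,n) : m ≥ −1, n ≥ 0, m+n=k} ((νⁿ − (ν−1)ⁿ)/n!)·V_m⁽ⁿ⁾(λ) = 0`.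
(Here `m` is reindexed as `j = m + 1 ∈ ℕ`, so the sums run over the antidiagonal
`j + n = k + 1`.)  Equivalently, `V_reg(λ;ℏ) = ∑_{m≥−1} ℏᵐ V_m(λ)` satisfies
`e^{(ν−1)ℏ∂}(e^{ℏ∂} − 1)·V_reg = (1/2)·log(3λ²)` upon Taylor expansion in `ℏ`. -/
theorem voros_difference_equation_14 (t l ν : ℝ) (hl : 0 < l) :
    (∑ p ∈ Finset.HasAntidiagonal.antidiagonal 1,
        ((ν ^ p.2 - (ν - 1) ^ p.2) / (p.2.factorial : ℝ))
          * iteratedDeriv p.2 (V14 t ν p.1) l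
      = (1 / 2) * Real.log (3 * l ^ 2))
    ∧ ∀ k : ℕ, 1 ≤ k →
        ∑ p ∈ Finset.HasAntidiagonal.antidiagonal (k + 1),
          ((ν ^ p.2 - (ν - 1) ^ p.2) / (p.2.factorial : ℝ))
            * iteratedDeriv p.2 (V14 t ν p.1) l = 0 := by
  refine ⟨?_, fun k hk => ?_⟩
  · simp [Finset.Nat.antidiagonal_succ, V14, deriv_deriv_F0 t hl.ne']
  · obtain ⟨k, rfl⟩ : ∃ k', k = k' + 1 := ⟨k - 1, by omega⟩
    have hterm : ∀ p ∈ antidiagonal (k + 2),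
        (ν ^ p.2 - (ν - 1) ^ p.2) / (p.2 ! : ℝ) * iteratedDeriv p.2 (V14 t ν p.1) l
          = k ! * l ^ (-1 - k : ℤ) * (Polynomial.aeval ν (Polynomial.bernoulli p.1) / p.1 ! *
            (((-ν) ^ p.2 - (1 - ν) ^ p.2) / p.2 !)) := by
      intro p hp
      rw [iteratedDeriv_V14 t ν hl.ne' (mem_antidiagonal.mp hp), ← neg_sub ν 1, neg_pow ν,
        neg_pow (ν - 1)]
      ring
    rw [sum_congr rfl hterm, ← mul_sum, sum_antidiagonal_bernoulli_mul_sub_pow ν (by omega),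
      mul_zero]
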